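/- arXiv:2210.15659 — 2 statements merged into one kernel-verified Lean document; each statement's English description precedes it below -/
import Mathlib

section
/- Let β > 0, D ≥ 0, S ⊆ ℝⁿ, let C₌ be any set and C_≤ ⊆ ℝⁿ, and let F : ℝⁿ → ℝⁿ be monotone on S. Let sequences x, y, λ : ℕ → ℝⁿ satisfy for all k ≥ 0: x_{k+1} ∈ S; λ_{k+1} = λ_k + β(x_{k+1} − y_{k+1}); −λ_k − β(x_{k+1} − y_k) is a subgradient of x ↦ ⟨F(x_{k+1}), x⟩ at x_{k+1} relative to S; y_k ∈ C_≤; and λ_k lies in the normal cone of C_≤ at y_k, i.e. ⟨λ_k, z − y_k⟩ ≤ 0 for all z ∈ C_≤. Assume (x^⋆, λ^⋆) is a KKT pair of the original problem: x^⋆ ∈ S ∩ C_≤, −λ^⋆ is a subgradient of x ↦ ⟨F(x^⋆), x⟩ at x^⋆ relative to S, and ⟨λ^⋆, z − x^⋆⟩ ≤ 0 for all z ∈ C_≤. Fix K ∈ ℕ and assume (x_K^⋆, λ_K^⋆) is a KKT pair for F evaluated at x_{K+1}: x_K^⋆ ∈ S ∩ C_≤, −λ_K^⋆ is a subgradient of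 x ↦ ⟨F(x_{K+1}), x⟩ at x_K^⋆ relative to S, ⟨λ_K^⋆, z − x_K^⋆⟩ ≤ 0 for all z ∈ C_≤, and ‖x^⋆ − x_K^⋆‖ ≤ D. Set Δ := (1/β)‖λ_0 − λ^⋆‖² + β‖y_0 − x^⋆‖². Then for every x ∈ S ∩ C_≤: ⟨F(x_{K+1}), x_{K+1} − x⟩ ≤ Δ/(K+1) + (2√Δ + ‖λ^⋆‖/√β + √β·D)·√(Δ/(K+1)), and moreover ‖x_{K+1} − y_{K+1}‖ ≤ √(Δ/(β(K+1))). -/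
open scoped RealInnerProductSpace

/-!
With `p = λ - λ⋆` and `s = y - x⋆`, the quantity `‖p‖² / β + β ‖s‖²` is a Lyapunov function:
monotonicity of `F + N_S` and of `N_{C≤}` makes it drop at step `k` by at least the residual
`‖λₖ₊₁ - λₖ‖² / β + β ‖yₖ₊₁ - yₖ‖²`, and the same monotonicity, applied to two consecutive
iterates, shows that the residuals do not increase. Hence `K + 1` times the `K`-th residual is at
most `Δ`, which bounds `‖x_{K+1} - y_{K+1}‖` since `λ_{K+1} - λ_K = β (x_{K+1} - y_{K+1})`.
For the gap, `x_K⋆` minimises `⟪F x_{K+1}, ·⟫` over `S ∩ C≤`, and the subgradient condition at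
`x_{K+1}` bounds `⟪F x_{K+1}, x_{K+1} - x_K⋆⟫` by `⟪λ_{K+1} + β (y_{K+1} - y_K), x_K⋆ - x_{K+1}⟫`,
which Cauchy–Schwarz controls through the residual bound, the Lyapunov bound and
`‖x⋆ - x_K⋆‖ ≤ D`.
-/

theorem add_succ_mul_le_of_add_le_of_antitone {V a : ℕ → ℝ} (hV : ∀ k, V (k + 1) + a k ≤ V k)
    (ha : Antitone a) (m : ℕ) : V (m + 1) + (m + 1) * a m ≤ V 0 := by
  induction m with
  | zero => simpa using hV 0
  | succ m ih =>
    have := mul_le_mul_of_nonneg_left (ha m.le_succ) (by positivity : (0 : ℝ) ≤ m + 1)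
    push_cast
    linarith [hV (m + 1)]

section WeightedSqNorm

variable {E : Type*} [SeminormedAddCommGroup E]

noncomputable def weightedSqNorm (β : ℝ) (p s : E) : ℝ := 1 / β * ‖p‖ ^ 2 + β * ‖s‖ ^ 2

theorem weightedSqNorm_nonneg {β : ℝ} (hβ : 0 ≤ β) (p s : E) : 0 ≤ weightedSqNorm β p s := by
  unfold weightedSqNorm; positivity

theorem norm_fst_le_of_weightedSqNorm_le {β c : ℝ} (hβ : 0 < β) {p s : E}
    (h : weightedSqNorm β p s ≤ c) : ‖p‖ ≤ √β * √c := by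
  rw [← Real.sqrt_mul hβ.le]
  refine Real.le_sqrt_of_sq_le ?_
  have : 1 / β * ‖p‖ ^ 2 ≤ c := by unfold weightedSqNorm at h; nlinarith [sq_nonneg ‖s‖]
  rwa [div_mul_eq_mul_div, one_mul, div_le_iff₀ hβ, mul_comm] at this

theorem norm_snd_le_of_weightedSqNorm_le {β c : ℝ} (hβ : 0 < β) {p s : E}
    (h : weightedSqNorm β p s ≤ c) : ‖s‖ ≤ √c / √β := by
  rw [← Real.sqrt_div' _ hβ.le]
  refine Real.le_sqrt_of_sq_le ?_
  have : β * ‖s‖ ^ 2 ≤ c := by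
    unfold weightedSqNorm at h; nlinarith [mul_nonneg (one_div_nonneg.2 hβ.le) (sq_nonneg ‖p‖)]
  rwa [le_div_iff₀ hβ, mul_comm]

end WeightedSqNorm

section InnerProductSpace

variable {E : Type*} [NormedAddCommGroup E] [InnerProductSpace ℝ E]

def normalCone (C : Set E) (c : E) : Set E := {v | ∀ z ∈ C, ⟪v, z - c⟫ ≤ 0}

def IsSubgradientOn (S : Set E) (h : E → ℝ) (a w : E) : Prop :=
  ∀ z ∈ S, h z ≥ h a + ⟪w, z - a⟫

def MonotoneOperatorOn (F : E → E) (S : Set E) : Prop :=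
  ∀ u ∈ S, ∀ v ∈ S, 0 ≤ ⟪F u - F v, u - v⟫

theorem inner_sub_nonneg_of_mem_normalCone {C : Set E} {a b u v : E} (ha : a ∈ C) (hb : b ∈ C)
    (hu : u ∈ normalCone C a) (hv : v ∈ normalCone C b) : 0 ≤ ⟪u - v, a - b⟫ := by
  have hub : ⟪u, b - a⟫ ≤ 0 := hu b hb
  have hva : ⟪v, a - b⟫ ≤ 0 := hv a ha
  rw [← neg_sub a b, inner_neg_right] at hub
  rw [inner_sub_left]
  linarith

theorem IsSubgradientOn.sub_mem_normalCone {S : Set E} {g a w : E}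
    (h : IsSubgradientOn S (⟪g, ·⟫) a w) : w - g ∈ normalCone S a := fun z hz => by
  have : ⟪g, z⟫ ≥ ⟪g, a⟫ + ⟪w, z - a⟫ := h z hz
  rw [inner_sub_left, inner_sub_right g]
  linarith

theorem IsSubgradientOn.inner_sub_nonneg {S : Set E} {F : E → E} (hF : MonotoneOperatorOn F S)
    {a b u v : E} (ha : a ∈ S) (hb : b ∈ S) (hu : IsSubgradientOn S (⟪F a, ·⟫) a u)
    (hv : IsSubgradientOn S (⟪F b, ·⟫) b v) : 0 ≤ ⟪u - v, a - b⟫ := by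
  have hN := inner_sub_nonneg_of_mem_normalCone ha hb hu.sub_mem_normalCone hv.sub_mem_normalCone
  rw [sub_sub_sub_comm, inner_sub_left] at hN
  linarith [hF a ha b hb]

theorem weightedSqNorm_smul_swap {β : ℝ} (hβ : β ≠ 0) (v s : E) :
    weightedSqNorm β (β • v) s = weightedSqNorm β (β • s) v := by
  simp only [weightedSqNorm, norm_smul, Real.norm_eq_abs, mul_pow, sq_abs]
  field_simp
  ring

theorem neg_two_mul_inner_le_weightedSqNorm {β : ℝ} (hβ : 0 < β) (p s : E) :
    -(2 * ⟪p, s⟫) ≤ weightedSqNorm β p s := by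
  have hsq : 0 ≤ ‖p + β • s‖ ^ 2 := sq_nonneg _
  rw [norm_add_sq_real, real_inner_smul_right, norm_smul, Real.norm_eq_abs, abs_of_pos hβ] at hsq
  have hexp : weightedSqNorm β p s + 2 * ⟪p, s⟫
      = (‖p‖ ^ 2 + 2 * (β * ⟪p, s⟫) + (β * ‖s‖) ^ 2) / β := by
    unfold weightedSqNorm; field_simp; ring
  linarith [div_nonneg hsq hβ.le]

/- Applied with `p, s` the current and `p₀, s₀` the previous multiplier and `y` offsets, so that
`s + β⁻¹ • (p - p₀)` is an `x`-offset, by `x (k + 1) = y (k + 1) + β⁻¹ • (lam (k + 1) - lam k)`. -/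
theorem two_mul_inner_add_smul_eq {β : ℝ} (hβ : β ≠ 0) (p p₀ s s₀ : E) :
    2 * ⟪p + β • (s - s₀), s + β⁻¹ • (p - p₀)⟫
      = 2 * ⟪p, s⟫ + 2 * ⟪p - p₀, s - s₀⟫ + weightedSqNorm β p s - weightedSqNorm β p₀ s₀
        + weightedSqNorm β (p - p₀) (s - s₀) := by
  simp only [weightedSqNorm, ← real_inner_self_eq_norm_sq, inner_add_left, inner_add_right,
    inner_sub_left, inner_sub_right, real_inner_smul_left, real_inner_smul_right,
    real_inner_comm p s, real_inner_comm p₀ s, real_inner_comm p s₀, real_inner_comm p₀ s₀,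
    real_inner_comm p p₀, real_inner_comm s s₀]
  field_simp
  ring

theorem weightedSqNorm_add_le_of_inner_nonpos {β : ℝ} (hβ : 0 < β) {p p₀ s s₀ : E}
    (h : ⟪p + β • (s - s₀), s + β⁻¹ • (p - p₀)⟫ ≤ 0) (hps : 0 ≤ ⟪p, s⟫)
    (hd : 0 ≤ ⟪p - p₀, s - s₀⟫) :
    weightedSqNorm β p s + weightedSqNorm β (p - p₀) (s - s₀) ≤ weightedSqNorm β p₀ s₀ := by
  linarith [two_mul_inner_add_smul_eq hβ.ne' p p₀ s s₀]

theorem weightedSqNorm_le_of_inner_nonpos {β : ℝ} (hβ : 0 < β) {p p₀ s s₀ : E}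
    (h : ⟪p + β • (s - s₀), s + β⁻¹ • (p - p₀)⟫ ≤ 0) (hps : 0 ≤ ⟪p, s⟫) :
    weightedSqNorm β p s ≤ weightedSqNorm β p₀ s₀ := by
  linarith [two_mul_inner_add_smul_eq hβ.ne' p p₀ s s₀,
    neg_two_mul_inner_le_weightedSqNorm hβ (p - p₀) (s - s₀)]

/- `lam_succ` and `mem_normalCone (k + 1)` together say that `y (k + 1)` is the projection of
`x (k + 1) + β⁻¹ • lam k` onto `C`. -/
structure IsPACVIIterate (β : ℝ) (S C : Set E) (F : E → E) (x y lam : ℕ → E) : Prop where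
  mem_S : ∀ k, x (k + 1) ∈ S
  lam_succ : ∀ k, lam (k + 1) = lam k + β • (x (k + 1) - y (k + 1))
  isSubgradientOn : ∀ k,
    IsSubgradientOn S (⟪F (x (k + 1)), ·⟫) (x (k + 1)) (-(lam k) - β • (x (k + 1) - y k))
  mem_C : ∀ k, y k ∈ C
  mem_normalCone : ∀ k, lam k ∈ normalCone C (y k)

structure IsKKTPair (S C : Set E) (g xs lams : E) : Prop where
  mem_S : xs ∈ S
  mem_C : xs ∈ C
  isSubgradientOn : IsSubgradientOn S (⟪g, ·⟫) xs (-lams)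
  mem_normalCone : lams ∈ normalCone C xs

theorem IsKKTPair.inner_le {S C : Set E} {g xs lams z : E} (h : IsKKTPair S C g xs lams)
    (hz : z ∈ S ∩ C) : ⟪g, xs⟫ ≤ ⟪g, z⟫ := by
  have hsub : ⟪g, z⟫ ≥ ⟪g, xs⟫ + ⟪-lams, z - xs⟫ := h.isSubgradientOn z hz.1
  have hnormal : ⟪lams, z - xs⟫ ≤ 0 := h.mem_normalCone z hz.2
  rw [inner_neg_left] at hsub
  linarith

namespace IsPACVIIterate

variable {β : ℝ} {S C : Set E} {F : E → E} {x y lam : ℕ → E}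

theorem lam_succ_sub (h : IsPACVIIterate β S C F x y lam) (k : ℕ) :
    lam (k + 1) - lam k = β • (x (k + 1) - y (k + 1)) := by
  rw [h.lam_succ k, add_sub_cancel_left]

theorem sub_eq_inv_smul (h : IsPACVIIterate β S C F x y lam) (hβ : β ≠ 0) (k : ℕ) :
    x (k + 1) - y (k + 1) = β⁻¹ • (lam (k + 1) - lam k) := by
  rw [h.lam_succ_sub k, inv_smul_smul₀ hβ]

theorem isSubgradientOn_lam_succ (h : IsPACVIIterate β S C F x y lam) (k : ℕ) :
    IsSubgradientOn S (⟪F (x (k + 1)), ·⟫) (x (k + 1))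
      (-(lam (k + 1) + β • (y (k + 1) - y k))) := by
  convert h.isSubgradientOn k using 1
  rw [h.lam_succ k]
  module

theorem weightedSqNorm_add_le (h : IsPACVIIterate β S C F x y lam) (hβ : 0 < β)
    (hF : MonotoneOperatorOn F S) {xs lams : E} (hkkt : IsKKTPair S C (F xs) xs lams) (k : ℕ) :
    weightedSqNorm β (lam (k + 1) - lams) (y (k + 1) - xs)
        + weightedSqNorm β (lam (k + 1) - lam k) (y (k + 1) - y k)
      ≤ weightedSqNorm β (lam k - lams) (y k - xs) := by
  have hmono := (h.isSubgradientOn_lam_succ k).inner_sub_nonneg hF (h.mem_S k) hkkt.mem_S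
    hkkt.isSubgradientOn
  have key := weightedSqNorm_add_le_of_inner_nonpos hβ (p := lam (k + 1) - lams)
    (p₀ := lam k - lams) (s := y (k + 1) - xs) (s₀ := y k - xs) ?_
    (inner_sub_nonneg_of_mem_normalCone (h.mem_C (k + 1)) hkkt.mem_C
      (h.mem_normalCone (k + 1)) hkkt.mem_normalCone) ?_
  · simpa only [sub_sub_sub_cancel_right] using key
  · have hx : y (k + 1) - xs + β⁻¹ • (lam (k + 1) - lam k) = x (k + 1) - xs := by
      rw [← h.sub_eq_inv_smul hβ.ne']; abel
    rw [sub_sub_sub_cancel_right, sub_sub_sub_cancel_right, hx, ← neg_nonneg, ← inner_neg_left]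
    convert hmono using 2
    abel
  · rw [sub_sub_sub_cancel_right, sub_sub_sub_cancel_right]
    exact inner_sub_nonneg_of_mem_normalCone (h.mem_C (k + 1)) (h.mem_C k)
      (h.mem_normalCone (k + 1)) (h.mem_normalCone k)

theorem weightedSqNorm_succ_le (h : IsPACVIIterate β S C F x y lam) (hβ : 0 < β)
    (hF : MonotoneOperatorOn F S) (k : ℕ) :
    weightedSqNorm β (lam (k + 2) - lam (k + 1)) (y (k + 2) - y (k + 1))
      ≤ weightedSqNorm β (lam (k + 1) - lam k) (y (k + 1) - y k) := by
  have hmono := (h.isSubgradientOn_lam_succ (k + 1)).inner_sub_nonneg hF (h.mem_S (k + 1)) (h.mem_S k)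
    (h.isSubgradientOn_lam_succ k)
  refine weightedSqNorm_le_of_inner_nonpos hβ ?_
    (inner_sub_nonneg_of_mem_normalCone (h.mem_C (k + 2)) (h.mem_C (k + 1))
      (h.mem_normalCone (k + 2)) (h.mem_normalCone (k + 1)))
  have hx : x (k + 2) - x (k + 1) = y (k + 2) - y (k + 1)
      + β⁻¹ • (lam (k + 2) - lam (k + 1) - (lam (k + 1) - lam k)) := by
    linear_combination (norm := module) h.sub_eq_inv_smul hβ.ne' (k + 1)
      - h.sub_eq_inv_smul hβ.ne' k
  rw [← hx, ← neg_nonneg, ← inner_neg_left]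
  convert hmono using 2
  module

theorem weightedSqNorm_add_succ_mul_le (h : IsPACVIIterate β S C F x y lam) (hβ : 0 < β)
    (hF : MonotoneOperatorOn F S) {xs lams : E} (hkkt : IsKKTPair S C (F xs) xs lams) (K : ℕ) :
    weightedSqNorm β (lam (K + 1) - lams) (y (K + 1) - xs)
        + (K + 1) * weightedSqNorm β (lam (K + 1) - lam K) (y (K + 1) - y K)
      ≤ weightedSqNorm β (lam 0 - lams) (y 0 - xs) :=
  add_succ_mul_le_of_add_le_of_antitone (V := fun k ↦ weightedSqNorm β (lam k - lams) (y k - xs))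
    (a := fun k ↦ weightedSqNorm β (lam (k + 1) - lam k) (y (k + 1) - y k))
    (h.weightedSqNorm_add_le hβ hF hkkt)
    (antitone_nat_of_succ_le (h.weightedSqNorm_succ_le hβ hF)) K

theorem weightedSqNorm_le (h : IsPACVIIterate β S C F x y lam) (hβ : 0 < β)
    (hF : MonotoneOperatorOn F S) {xs lams : E} (hkkt : IsKKTPair S C (F xs) xs lams) (K : ℕ) :
    weightedSqNorm β (lam (K + 1) - lams) (y (K + 1) - xs)
      ≤ weightedSqNorm β (lam 0 - lams) (y 0 - xs) := by
  nlinarith [h.weightedSqNorm_add_succ_mul_le hβ hF hkkt K,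
    weightedSqNorm_nonneg hβ.le (lam (K + 1) - lam K) (y (K + 1) - y K)]

theorem weightedSqNorm_sub_le (h : IsPACVIIterate β S C F x y lam) (hβ : 0 < β)
    (hF : MonotoneOperatorOn F S) {xs lams : E} (hkkt : IsKKTPair S C (F xs) xs lams) (K : ℕ) :
    weightedSqNorm β (lam (K + 1) - lam K) (y (K + 1) - y K)
      ≤ weightedSqNorm β (lam 0 - lams) (y 0 - xs) / (K + 1) := by
  rw [le_div_iff₀ (by positivity), mul_comm]
  linarith [h.weightedSqNorm_add_succ_mul_le hβ hF hkkt K,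
    weightedSqNorm_nonneg hβ.le (lam (K + 1) - lams) (y (K + 1) - xs)]

theorem norm_sub_le (h : IsPACVIIterate β S C F x y lam) (hβ : 0 < β)
    (hF : MonotoneOperatorOn F S) {xs lams : E} (hkkt : IsKKTPair S C (F xs) xs lams) (K : ℕ) :
    ‖x (K + 1) - y (K + 1)‖
      ≤ √(weightedSqNorm β (lam 0 - lams) (y 0 - xs) / (K + 1)) / √β := by
  have hres := h.weightedSqNorm_sub_le hβ hF hkkt K
  rw [h.lam_succ_sub, weightedSqNorm_smul_swap hβ.ne'] at hres
  exact norm_snd_le_of_weightedSqNorm_le hβ hres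

theorem inner_sub_le_norm_mul_add (h : IsPACVIIterate β S C F x y lam) (hβ : 0 ≤ β) {K : ℕ}
    {xK lamK z : E} (hK : IsKKTPair S C (F (x (K + 1))) xK lamK) (hz : z ∈ S ∩ C) :
    ⟪F (x (K + 1)), x (K + 1) - z⟫
      ≤ ‖lam (K + 1)‖ * ‖y (K + 1) - x (K + 1)‖
        + β * (‖y (K + 1) - y K‖ * ‖xK - x (K + 1)‖) := by
  have hopt := hK.inner_le hz
  have hsub := h.isSubgradientOn_lam_succ K xK hK.mem_S
  have hnormal : ⟪lam (K + 1), xK - y (K + 1)⟫ ≤ 0 := h.mem_normalCone (K + 1) xK hK.mem_C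
  have hlam := real_inner_le_norm (lam (K + 1)) (y (K + 1) - x (K + 1))
  have hy := mul_le_mul_of_nonneg_left
    (real_inner_le_norm (y (K + 1) - y K) (xK - x (K + 1))) hβ
  simp only [inner_neg_left, inner_add_left, real_inner_smul_left, inner_sub_left,
    inner_sub_right] at hsub hnormal hlam hy ⊢
  linarith

theorem inner_sub_le (h : IsPACVIIterate β S C F x y lam) (hβ : 0 < β)
    (hF : MonotoneOperatorOn F S) {xs lams : E} (hkkt : IsKKTPair S C (F xs) xs lams) {K : ℕ}
    {xK lamK z : E} (hK : IsKKTPair S C (F (x (K + 1))) xK lamK) {D : ℝ}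
    (hdist : ‖xs - xK‖ ≤ D) (hz : z ∈ S ∩ C) :
    ⟪F (x (K + 1)), x (K + 1) - z⟫
      ≤ weightedSqNorm β (lam 0 - lams) (y 0 - xs) / (K + 1)
        + (2 * √(weightedSqNorm β (lam 0 - lams) (y 0 - xs)) + ‖lams‖ / √β + √β * D)
          * √(weightedSqNorm β (lam 0 - lams) (y 0 - xs) / (K + 1)) := by
  have hΔ := weightedSqNorm_nonneg hβ.le (lam 0 - lams) (y 0 - xs)
  set Δ := weightedSqNorm β (lam 0 - lams) (y 0 - xs)
  have hV := h.weightedSqNorm_le hβ hF hkkt K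
  have hlam : ‖lam (K + 1)‖ ≤ ‖lams‖ + √β * √Δ :=
    (norm_le_norm_add_norm_sub' _ lams).trans
      (add_le_add_right (norm_fst_le_of_weightedSqNorm_le hβ hV) _)
  have hxy : ‖y (K + 1) - x (K + 1)‖ ≤ √(Δ / (K + 1)) / √β :=
    norm_sub_rev (x (K + 1)) _ ▸ h.norm_sub_le hβ hF hkkt K
  have hyy : ‖y (K + 1) - y K‖ ≤ √(Δ / (K + 1)) / √β :=
    norm_snd_le_of_weightedSqNorm_le hβ (h.weightedSqNorm_sub_le hβ hF hkkt K)
  have hxK : ‖xK - x (K + 1)‖ ≤ D + √Δ / √β + √(Δ / (K + 1)) / √β := by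
    calc ‖xK - x (K + 1)‖ ≤ ‖xK - y (K + 1)‖ + ‖y (K + 1) - x (K + 1)‖ :=
          norm_sub_le_norm_sub_add_norm_sub _ _ _
      _ ≤ ‖xs - xK‖ + ‖y (K + 1) - xs‖ + ‖y (K + 1) - x (K + 1)‖ := by
          rw [norm_sub_rev xs, norm_sub_rev (y (K + 1)) xs]
          gcongr
          exact norm_sub_le_norm_sub_add_norm_sub _ _ _
      _ ≤ _ := by gcongr; exact norm_snd_le_of_weightedSqNorm_le hβ hV
  have hsqβ : √β ^ 2 = β := Real.sq_sqrt hβ.le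
  have hsqβpos : 0 < √β := Real.sqrt_pos.2 hβ
  calc ⟪F (x (K + 1)), x (K + 1) - z⟫
      ≤ ‖lam (K + 1)‖ * ‖y (K + 1) - x (K + 1)‖
          + β * (‖y (K + 1) - y K‖ * ‖xK - x (K + 1)‖) :=
        h.inner_sub_le_norm_mul_add hβ.le hK hz
    _ ≤ (‖lams‖ + √β * √Δ) * (√(Δ / (K + 1)) / √β)
          + β * (√(Δ / (K + 1)) / √β * (D + √Δ / √β + √(Δ / (K + 1)) / √β)) := by
        gcongr
    _ = √(Δ / (K + 1)) ^ 2 + (2 * √Δ + ‖lams‖ / √β + √β * D) * √(Δ / (K + 1)) := by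
        generalize √β = s at hsqβ hsqβpos ⊢
        subst hsqβ
        field_simp
        ring
    _ = _ := by rw [Real.sq_sqrt (by positivity)]

end IsPACVIIterate

end InnerProductSpace

theorem stmt9_general {n : ℕ} (β D : ℝ) (hβ : 0 < β)
    (S Cle : Set (EuclideanSpace ℝ (Fin n)))
    (F : EuclideanSpace ℝ (Fin n) → EuclideanSpace ℝ (Fin n))
    (x y lam : ℕ → EuclideanSpace ℝ (Fin n))
    (hmono : ∀ u ∈ S, ∀ v ∈ S, 0 ≤ ⟪F u - F v, u - v⟫)
    (hxS : ∀ k, x (k+1) ∈ S)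
    (hlam : ∀ k, lam (k+1) = lam k + β • (x (k+1) - y (k+1)))
    (hfsub : ∀ k, ∀ z ∈ S,
      ⟪F (x (k+1)), z⟫ ≥ ⟪F (x (k+1)), x (k+1)⟫
        + ⟪-(lam k) - β • (x (k+1) - y k), z - x (k+1)⟫)
    (hyC : ∀ k, y k ∈ Cle)
    (hnormal : ∀ k, ∀ z ∈ Cle, ⟪lam k, z - y k⟫ ≤ 0)
    (xs lams : EuclideanSpace ℝ (Fin n))
    (hxsS : xs ∈ S) (hxsC : xs ∈ Cle)
    (hfs : ∀ z ∈ S, ⟪F xs, z⟫ ≥ ⟪F xs, xs⟫ + ⟪-lams, z - xs⟫)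
    (hns : ∀ z ∈ Cle, ⟪lams, z - xs⟫ ≤ 0)
    (K : ℕ) (xK lamK : EuclideanSpace ℝ (Fin n))
    (hxKS : xK ∈ S) (hxKC : xK ∈ Cle)
    (hfK : ∀ z ∈ S, ⟪F (x (K+1)), z⟫ ≥ ⟪F (x (K+1)), xK⟫ + ⟪-lamK, z - xK⟫)
    (hnK : ∀ z ∈ Cle, ⟪lamK, z - xK⟫ ≤ 0)
    (hdist : ‖xs - xK‖ ≤ D) :
    (∀ xx ∈ S ∩ Cle,
      ⟪F (x (K+1)), x (K+1) - xx⟫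
        ≤ ((1/β) * ‖lam 0 - lams‖^2 + β * ‖y 0 - xs‖^2) / (K+1)
          + (2 * Real.sqrt ((1/β) * ‖lam 0 - lams‖^2 + β * ‖y 0 - xs‖^2)
              + ‖lams‖ / Real.sqrt β + Real.sqrt β * D)
            * Real.sqrt (((1/β) * ‖lam 0 - lams‖^2 + β * ‖y 0 - xs‖^2) / (K+1))) ∧
    ‖x (K+1) - y (K+1)‖
      ≤ Real.sqrt (((1/β) * ‖lam 0 - lams‖^2 + β * ‖y 0 - xs‖^2) / (β * (K+1))) := by
  have hiter : IsPACVIIterate β S Cle F x y lam := ⟨hxS, hlam, hfsub, hyC, hnormal⟩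
  have hkkt : IsKKTPair S Cle (F xs) xs lams := ⟨hxsS, hxsC, hfs, hns⟩
  have hkktK : IsKKTPair S Cle (F (x (K + 1))) xK lamK := ⟨hxKS, hxKC, hfK, hnK⟩
  refine ⟨fun z hz ↦ hiter.inner_sub_le hβ hmono hkkt hkktK hdist hz, ?_⟩
  rw [mul_comm β ((K : ℝ) + 1), ← div_div, Real.sqrt_div' _ hβ.le]
  exact hiter.norm_sub_le hβ hmono hkkt K

/-- Theorem: last-iterate rate of P-ACVI: the barrier is replaced by
projection onto `Cle`, encoded by `y k ∈ Cle` and `λ k` in the normal cone of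
`Cle` at `y k`. -/
theorem stmt9 {n : ℕ} (β D : ℝ) (hβ : 0 < β) (hD : 0 ≤ D)
    (S Cle : Set (EuclideanSpace ℝ (Fin n)))
    (F : EuclideanSpace ℝ (Fin n) → EuclideanSpace ℝ (Fin n))
    (x y lam : ℕ → EuclideanSpace ℝ (Fin n))
    (hmono : ∀ u ∈ S, ∀ v ∈ S, 0 ≤ ⟪F u - F v, u - v⟫)
    (hxS : ∀ k, x (k+1) ∈ S)
    (hlam : ∀ k, lam (k+1) = lam k + β • (x (k+1) - y (k+1)))
    (hfsub : ∀ k, ∀ z ∈ S,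
      ⟪F (x (k+1)), z⟫ ≥ ⟪F (x (k+1)), x (k+1)⟫
        + ⟪-(lam k) - β • (x (k+1) - y k), z - x (k+1)⟫)
    (hyC : ∀ k, y k ∈ Cle)
    (hnormal : ∀ k, ∀ z ∈ Cle, ⟪lam k, z - y k⟫ ≤ 0)
    (xs lams : EuclideanSpace ℝ (Fin n))
    (hxsS : xs ∈ S) (hxsC : xs ∈ Cle)
    (hfs : ∀ z ∈ S, ⟪F xs, z⟫ ≥ ⟪F xs, xs⟫ + ⟪-lams, z - xs⟫)
    (hns : ∀ z ∈ Cle, ⟪lams, z - xs⟫ ≤ 0)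
    (K : ℕ) (xK lamK : EuclideanSpace ℝ (Fin n))
    (hxKS : xK ∈ S) (hxKC : xK ∈ Cle)
    (hfK : ∀ z ∈ S, ⟪F (x (K+1)), z⟫ ≥ ⟪F (x (K+1)), xK⟫ + ⟪-lamK, z - xK⟫)
    (hnK : ∀ z ∈ Cle, ⟪lamK, z - xK⟫ ≤ 0)
    (hdist : ‖xs - xK‖ ≤ D) :
    (∀ xx ∈ S ∩ Cle,
      ⟪F (x (K+1)), x (K+1) - xx⟫
        ≤ ((1/β) * ‖lam 0 - lams‖^2 + β * ‖y 0 - xs‖^2) / (K+1)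
          + (2 * Real.sqrt ((1/β) * ‖lam 0 - lams‖^2 + β * ‖y 0 - xs‖^2)
              + ‖lams‖ / Real.sqrt β + Real.sqrt β * D)
            * Real.sqrt (((1/β) * ‖lam 0 - lams‖^2 + β * ‖y 0 - xs‖^2) / (K+1))) ∧
    ‖x (K+1) - y (K+1)‖
      ≤ Real.sqrt (((1/β) * ‖lam 0 - lams‖^2 + β * ‖y 0 - xs‖^2) / (β * (K+1))) :=
  stmt9_general β D hβ S Cle F x y lam hmono hxS hlam hfsub hyC hnormal xs lams hxsS hxsC hfs hns K
    xK lamK hxKS hxKC hfK hnK hdist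
end

section
/- Let μ > 0, β > 0, c ∈ ℝ, w ∈ ℝⁿ, and let φ_1, …, φ_m : ℝⁿ → ℝ be differentiable, with ‖∇φ_i(y)‖ ≤ M_i for all y ∈ ℝⁿ and ∇φ_i Lipschitz with constant L_i (i.e. φ_i is L_i-smooth), for each i. Define ℘₂(z) := −μ·log(−z) if z ≤ −e^{−c/μ} and ℘₂(z) := μ·e^{c/μ}·z + μ + c otherwise, and ψ̃(y) := ∑_{i=1}^m ℘₂(φ_i(y)) + (β/2)‖y − w‖². Then ψ̃ is differentiable on ℝⁿ and its gradient is Lipschitz with constant ∑_{i=1}^m ( μ·e^{c/μ}·L_i + μ·e^{2c/μ}·M_i² ) + β; the proof uses that ℘₂ is continuously differentiable with 0 ≤ ℘₂′(z) ≤ μ·e^{c/μ} and ℘₂′ Lipschitz with constant μ·e^{2c/μ}. -/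
/-!
The extended barrier `℘₂` glues `-μ log(-z)` to its tangent line at `-a`, `a = e^{-c/μ}`, so its
derivative is `μ / max (-z) a`: bounded by `μ / a` and, since `t ↦ μ / t` is `μ / a²`-Lipschitz on
`[a, ∞)`, Lipschitz with constant `μ / a²`. The gradient of `℘₂ ∘ φᵢ` is `℘₂'(φᵢ y) • ∇φᵢ(y)`, and
splitting its increment as `℘₂'(φᵢ y) • (∇φᵢ y - ∇φᵢ x) + (℘₂'(φᵢ y) - ℘₂'(φᵢ x)) • ∇φᵢ x`, with
`φᵢ` itself `Mᵢ`-Lipschitz, gives the constant `(μ/a) Lᵢ + (μ/a²) Mᵢ²`; the quadratic term adds `β`.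
-/

open Real Set InnerProductSpace Finset
open scoped Gradient

noncomputable def extLogBarrier (μ a z : ℝ) : ℝ :=
  if z ≤ -a then -μ * log (-z) else μ / a * z + μ - μ * log a

noncomputable def extLogBarrierDeriv (μ a z : ℝ) : ℝ :=
  μ / max (-z) a

section ExtLogBarrier

variable {μ a : ℝ}

theorem extLogBarrier_exp_neg_div (hμ : μ ≠ 0) (c : ℝ) :
    extLogBarrier μ (exp (-c / μ)) = fun z => if z ≤ -exp (-c / μ) then -μ * log (-z)
      else μ * exp (c / μ) * z + μ + c := by
  funext z
  simp only [extLogBarrier, neg_div, exp_neg, div_inv_eq_mul, log_inv, log_exp]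
  split_ifs
  · rfl
  · field_simp
    ring

theorem hasDerivAt_extLogBarrier (ha : 0 < a) (z : ℝ) :
    HasDerivAt (extLogBarrier μ a) (extLogBarrierDeriv μ a z) z := by
  have hleft : ∀ z ≤ -a, HasDerivWithinAt (extLogBarrier μ a) (extLogBarrierDeriv μ a z)
      (Iic (-a)) z := by
    intro z hz
    have hlog : HasDerivAt (fun z => -μ * log (-z)) (-μ * (-1 / -z)) z :=
      ((hasDerivAt_neg z).log (by linarith)).const_mul (-μ)
    refine (hlog.hasDerivWithinAt.congr (fun t ht => if_pos ht) (if_pos hz)).congr_deriv ?_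
    rw [extLogBarrierDeriv, max_eq_left (by linarith)]
    field_simp
  have hright : ∀ z, -a ≤ z → HasDerivWithinAt (extLogBarrier μ a) (extLogBarrierDeriv μ a z)
      (Ici (-a)) z := by
    have hline : ∀ t, -a ≤ t → extLogBarrier μ a t = μ / a * t + μ - μ * log a := by
      intro t ht
      rcases ht.lt_or_eq with ht | rfl
      · exact if_neg (not_le.2 ht)
      · rw [extLogBarrier, if_pos le_rfl, neg_neg]
        field_simp
        ring
    intro z hz
    have hlin : HasDerivAt (fun t => μ / a * t + μ - μ * log a) (μ / a * 1) z :=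
      (((hasDerivAt_id z).const_mul (μ / a)).add_const μ).sub_const _
    refine (hlin.hasDerivWithinAt.congr (fun t ht => hline t ht) (hline z hz)).congr_deriv ?_
    rw [extLogBarrierDeriv, max_eq_right (by linarith), mul_one]
  rcases lt_trichotomy z (-a) with hz | rfl | hz
  · exact (hleft z hz.le).hasDerivAt (Iic_mem_nhds hz)
  · have h := (hleft _ le_rfl).union (hright _ le_rfl)
    rwa [Iic_union_Ici, hasDerivWithinAt_univ] at h
  · exact (hright z hz.le).hasDerivAt (Ici_mem_nhds hz)

theorem abs_extLogBarrierDeriv_le (hμ : 0 ≤ μ) (ha : 0 < a) (z : ℝ) :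
    |extLogBarrierDeriv μ a z| ≤ μ / a := by
  have hmax : 0 < max (-z) a := lt_max_of_lt_right ha
  rw [extLogBarrierDeriv, abs_of_nonneg (div_nonneg hμ hmax.le)]
  exact div_le_div_of_nonneg_left hμ ha (le_max_right _ _)

theorem abs_div_sub_div_le_of_le (hμ : 0 ≤ μ) (ha : 0 < a) {u v : ℝ} (hu : a ≤ u) (hv : a ≤ v) :
    |μ / v - μ / u| ≤ μ / a ^ 2 * |v - u| := by
  have hu0 : 0 < u := ha.trans_le hu
  have hv0 : 0 < v := ha.trans_le hv
  have hdiff : μ / v - μ / u = μ * (u - v) / (u * v) := by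
    field_simp
  rw [hdiff, abs_div, abs_mul, abs_of_nonneg hμ, abs_of_pos (mul_pos hu0 hv0), abs_sub_comm,
    div_mul_eq_mul_div]
  exact div_le_div_of_nonneg_left (by positivity) (by positivity)
    (by nlinarith [mul_le_mul hu hv ha.le hu0.le])

theorem abs_extLogBarrierDeriv_sub_le (hμ : 0 ≤ μ) (ha : 0 < a) (x y : ℝ) :
    |extLogBarrierDeriv μ a y - extLogBarrierDeriv μ a x| ≤ μ / a ^ 2 * |y - x| :=
  calc |extLogBarrierDeriv μ a y - extLogBarrierDeriv μ a x|
      ≤ μ / a ^ 2 * |max (-y) a - max (-x) a| :=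
        abs_div_sub_div_le_of_le hμ ha (le_max_right _ _) (le_max_right _ _)
    _ ≤ μ / a ^ 2 * |y - x| := by
        refine mul_le_mul_of_nonneg_left ?_ (by positivity)
        exact (abs_max_sub_max_le_abs (-y) (-x) a).trans_eq (by rw [neg_sub_neg, abs_sub_comm])

end ExtLogBarrier

theorem norm_sum_sub_sum_le {ι E F : Type*} [SeminormedAddCommGroup E]
    [SeminormedAddCommGroup F] {s : Finset ι} {G : ι → E → F} {C : ι → ℝ}
    (hG : ∀ i ∈ s, ∀ x y, ‖G i y - G i x‖ ≤ C i * ‖y - x‖)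
    (x y : E) : ‖∑ i ∈ s, G i y - ∑ i ∈ s, G i x‖ ≤ (∑ i ∈ s, C i) * ‖y - x‖ := by
  rw [← sum_sub_distrib, sum_mul]
  exact (norm_sum_le _ _).trans (sum_le_sum fun i hi => hG i hi x y)

section Gradient

variable {E : Type*} [NormedAddCommGroup E] [InnerProductSpace ℝ E] [CompleteSpace E]

theorem HasDerivAt.hasGradientAt_comp {g : ℝ → ℝ} {g' : ℝ} {φ : E → ℝ} {φ' : E} {y : E}
    (hg : HasDerivAt g g' (φ y)) (hφ : HasGradientAt φ φ' y) :
    HasGradientAt (fun x => g (φ x)) (g' • φ') y := by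
  rw [hasGradientAt_iff_hasFDerivAt, map_smul]
  exact hg.comp_hasFDerivAt y hφ.hasFDerivAt

theorem HasGradientAt.add {f g : E → ℝ} {f' g' : E} {y : E} (hf : HasGradientAt f f' y)
    (hg : HasGradientAt g g' y) : HasGradientAt (fun x => f x + g x) (f' + g') y := by
  rw [hasGradientAt_iff_hasFDerivAt, map_add]
  exact hf.hasFDerivAt.add hg.hasFDerivAt

theorem HasGradientAt.fun_sum {ι : Type*} {s : Finset ι} {f : ι → E → ℝ} {f' : ι → E} {y : E}
    (hf : ∀ i ∈ s, HasGradientAt (f i) (f' i) y) :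
    HasGradientAt (fun x => ∑ i ∈ s, f i x) (∑ i ∈ s, f' i) y := by
  rw [hasGradientAt_iff_hasFDerivAt, map_sum]
  exact HasFDerivAt.fun_sum fun i hi => (hf i hi).hasFDerivAt

theorem hasGradientAt_norm_sub_sq (w y : E) :
    HasGradientAt (fun x => ‖x - w‖ ^ 2) ((2 : ℝ) • (y - w)) y := by
  rw [hasGradientAt_iff_hasFDerivAt]
  refine ((hasFDerivAt_id y).sub_const w).norm_sq.congr_fderiv ?_
  ext u
  simp

theorem hasGradientAt_const_mul_norm_sub_sq (β : ℝ) (w y : E) :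
    HasGradientAt (fun x => β / 2 * ‖x - w‖ ^ 2) (β • (y - w)) y := by
  have hg : HasDerivAt (fun t => β / 2 * t) (β / 2) (‖y - w‖ ^ 2) := by
    simpa using (hasDerivAt_id (‖y - w‖ ^ 2)).const_mul (β / 2)
  convert hg.hasGradientAt_comp (φ := fun x => ‖x - w‖ ^ 2) (hasGradientAt_norm_sub_sq w y)
    using 1
  rw [smul_smul]
  norm_num

theorem abs_sub_le_of_norm_gradient_le {φ : E → ℝ} {M : ℝ} (hφ : Differentiable ℝ φ)
    (hM : ∀ y, ‖∇ φ y‖ ≤ M) (x y : E) : |φ y - φ x| ≤ M * ‖y - x‖ := by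
  have hfderiv : ∀ z ∈ univ, ‖fderiv ℝ φ z‖ ≤ M := fun z _ => by
    rw [← toDual_gradient, LinearIsometryEquiv.norm_map]
    exact hM z
  simpa using convex_univ.norm_image_sub_le_of_norm_fderiv_le (fun z _ => hφ z) hfderiv
    (mem_univ x) (mem_univ y)

theorem norm_smul_gradient_sub_le {g' : ℝ → ℝ} {φ : E → ℝ} {K K' M L : ℝ}
    (hg' : ∀ z, |g' z| ≤ K) (hg'_lip : ∀ u v, |g' v - g' u| ≤ K' * |v - u|)
    (hφ : Differentiable ℝ φ) (hM : ∀ y, ‖∇ φ y‖ ≤ M)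
    (hL : ∀ x y, ‖∇ φ y - ∇ φ x‖ ≤ L * ‖y - x‖) (x y : E) :
    ‖g' (φ y) • ∇ φ y - g' (φ x) • ∇ φ x‖ ≤ (K * L + K' * M ^ 2) * ‖y - x‖ := by
  have hK : 0 ≤ K := (abs_nonneg _).trans (hg' 0)
  have hK' : 0 ≤ K' := by simpa using (abs_nonneg _).trans (hg'_lip 0 1)
  have hM0 : 0 ≤ M := (norm_nonneg _).trans (hM x)
  have hsplit : g' (φ y) • ∇ φ y - g' (φ x) • ∇ φ x
      = g' (φ y) • (∇ φ y - ∇ φ x) + (g' (φ y) - g' (φ x)) • ∇ φ x := by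
    module
  calc ‖g' (φ y) • ∇ φ y - g' (φ x) • ∇ φ x‖
      ≤ |g' (φ y)| * ‖∇ φ y - ∇ φ x‖ + |g' (φ y) - g' (φ x)| * ‖∇ φ x‖ := by
        rw [hsplit, ← Real.norm_eq_abs, ← Real.norm_eq_abs, ← norm_smul, ← norm_smul]
        exact norm_add_le _ _
    _ ≤ K * (L * ‖y - x‖) + K' * (M * ‖y - x‖) * M := by
        gcongr
        · exact hg' _
        · exact hL x y
        · exact (hg'_lip _ _).trans (by gcongr; exact abs_sub_le_of_norm_gradient_le hφ hM x y)
        · exact hM x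
    _ = (K * L + K' * M ^ 2) * ‖y - x‖ := by ring

end Gradient

/-- Prop: smoothness of the extended-barrier y-subproblem
objective: with the extended barrier `℘₂`, the objective
`ψ̃(y) = ∑ᵢ ℘₂(φᵢ(y)) + (β/2)‖y - w‖²` is differentiable with gradient Lipschitz
with constant `∑ᵢ (μ e^{c/μ} Lᵢ + μ e^{2c/μ} Mᵢ²) + β`. -/
theorem stmt19 {n m : ℕ} (μ β c : ℝ) (hμ : 0 < μ) (hβ : 0 < β)
    (w : EuclideanSpace ℝ (Fin n))
    (φ : Fin m → EuclideanSpace ℝ (Fin n) → ℝ)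
    (M L : Fin m → ℝ)
    (hdiff : ∀ i, Differentiable ℝ (φ i))
    (hM : ∀ i y, ‖gradient (φ i) y‖ ≤ M i)
    (hL : ∀ i x y, ‖gradient (φ i) y - gradient (φ i) x‖ ≤ L i * ‖y - x‖)
    (p2 : ℝ → ℝ)
    (hp2 : p2 = fun z => if z ≤ -Real.exp (-c/μ) then -μ * Real.log (-z)
      else μ * Real.exp (c/μ) * z + μ + c)
    (ψt : EuclideanSpace ℝ (Fin n) → ℝ)
    (hψt : ψt = fun y => (∑ i, p2 (φ i y)) + (β/2) * ‖y - w‖^2) :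
    Differentiable ℝ ψt ∧
    ∀ x y, ‖gradient ψt y - gradient ψt x‖
      ≤ ((∑ i, (μ * Real.exp (c/μ) * L i + μ * Real.exp (2*c/μ) * (M i)^2)) + β)
          * ‖y - x‖ := by
  set a := exp (-c / μ)
  have ha : 0 < a := exp_pos _
  have hinv : a⁻¹ = exp (c / μ) := by
    simp only [a, ← exp_neg, neg_div, neg_neg]
  have hK : μ * exp (c / μ) = μ / a := by
    rw [div_eq_mul_inv μ a, hinv]
  have hK' : μ * exp (2 * c / μ) = μ / a ^ 2 := by
    rw [div_eq_mul_inv μ (a ^ 2), ← inv_pow, hinv, ← exp_nat_mul]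
    congr 2
    push_cast
    ring
  rw [← extLogBarrier_exp_neg_div hμ.ne'] at hp2
  subst hp2 hψt
  set G : EuclideanSpace ℝ (Fin n) → EuclideanSpace ℝ (Fin n) :=
    fun y => ∑ i, extLogBarrierDeriv μ a (φ i y) • ∇ (φ i) y
  have hgrad : ∀ y, HasGradientAt (fun y => ∑ i, extLogBarrier μ a (φ i y) + β / 2 * ‖y - w‖ ^ 2)
      (G y + β • (y - w)) y := fun y =>
    (HasGradientAt.fun_sum fun i _ => (hasDerivAt_extLogBarrier ha _).hasGradientAt_comp
      (hdiff i y).hasGradientAt).add (hasGradientAt_const_mul_norm_sub_sq β w y)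
  refine ⟨fun y => (hgrad y).differentiableAt, fun x y => ?_⟩
  have hG : ‖G y - G x‖ ≤ (∑ i, (μ / a * L i + μ / a ^ 2 * M i ^ 2)) * ‖y - x‖ :=
    norm_sum_sub_sum_le (fun i _ => norm_smul_gradient_sub_le
      (abs_extLogBarrierDeriv_le hμ.le ha) (abs_extLogBarrierDeriv_sub_le hμ.le ha)
      (hdiff i) (hM i) (hL i)) x y
  rw [(hgrad y).gradient, (hgrad x).gradient, hK, hK', add_mul]
  calc ‖G y + β • (y - w) - (G x + β • (x - w))‖ = ‖(G y - G x) + β • (y - x)‖ := by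
        congr 1
        module
    _ ≤ ‖G y - G x‖ + β * ‖y - x‖ :=
        (norm_add_le _ _).trans_eq (by rw [norm_smul, Real.norm_of_nonneg hβ.le])
    _ ≤ _ := by gcongr
end
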